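/- Let G be a simple graph on Fin n with no null vertex (every vertex has degree at least 1) and let f : Fin n → EuclideanSpace ℂ (Fin k) be a G(n,k)-frame. If f is a tight frame, then f is a uniform frame: there exists a constant c such that ‖f i‖ = c for every i ∈ Fin n. -/

import Mathlib

/-!
Evaluating the tightness identity at `v = f j` gives `∑ᵢ L(G)ᵢⱼ² = α ‖f j‖² = α L(G)ⱼⱼ`.
The `j`-th column of the Laplacian has `d = deg j` on the diagonal and `d` entries `-1`,
so `d² + d = α d`, and `d ≠ 0` forces `d = α - 1` for every vertex. Hence all
`‖f j‖ = √d` coincide.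
-/

open scoped ComplexInnerProductSpace
open Finset

namespace SimpleGraph

variable {V R : Type*} [Fintype V] [DecidableEq V] (G : SimpleGraph V) [DecidableRel G.Adj]

theorem lapMatrix_apply_self [AddGroupWithOne R] (i : V) :
    G.lapMatrix R i i = G.degree i := by
  simp [lapMatrix, degMatrix]

theorem lapMatrix_apply_sq [Ring R] (i j : V) :
    G.lapMatrix R i j ^ 2 =
      (if i = j then (G.degree j : R) ^ 2 else 0) + if G.Adj i j then 1 else 0 := by
  by_cases hij : i = j
  · subst hij
    simp [lapMatrix_apply_self]
  · by_cases hadj : G.Adj i j <;> simp [lapMatrix, degMatrix, hij, hadj]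

theorem sum_lapMatrix_apply_sq [Ring R] (j : V) :
    ∑ i, G.lapMatrix R i j ^ 2 = (G.degree j : R) ^ 2 + G.degree j := by
  simp [lapMatrix_apply_sq, sum_add_distrib, degree_eq_sum_if_adj, adj_comm]

end SimpleGraph

section TightFrame

variable {ι E : Type*} [Fintype ι] [NormedAddCommGroup E] [InnerProductSpace ℂ E]

theorem norm_sq_eq_of_inner_self_eq_ofReal {x : E} {r : ℝ} (h : ⟪x, x⟫ = r) :
    ‖x‖ ^ 2 = r := by
  rw [← inner_self_eq_norm_sq (𝕜 := ℂ), h]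
  exact Complex.ofReal_re r

theorem sum_sq_gram_eq_of_tight {f : ι → E} {M : Matrix ι ι ℝ}
    (hgram : ∀ i j, ⟪f i, f j⟫ = M i j) {α : ℝ}
    (htight : ∀ v, ∑ i, ‖⟪f i, v⟫‖ ^ 2 = α * ‖v‖ ^ 2) (j : ι) :
    ∑ i, M i j ^ 2 = α * M j j := by
  have h := htight (f j)
  rw [norm_sq_eq_of_inner_self_eq_ofReal (hgram j j)] at h
  simpa [hgram, Complex.norm_real, sq_abs] using h

end TightFrame

theorem stmt_12_general (n k : ℕ) (G : SimpleGraph (Fin n)) [DecidableRel G.Adj]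
    (hnull : ∀ v : Fin n, 1 ≤ G.degree v)
    (f : Fin n → EuclideanSpace ℂ (Fin k))
    (hf_gram : ∀ i j : Fin n, ⟪f i, f j⟫ = ((G.lapMatrix ℝ) i j : ℂ))
    (htight : ∃ α : ℝ, 0 < α ∧
      ∀ v : EuclideanSpace ℂ (Fin k),
        ∑ i : Fin n, ‖⟪f i, v⟫‖ ^ 2 = α * ‖v‖ ^ 2) :
    ∃ c : ℝ, ∀ i : Fin n, ‖f i‖ = c := by
  obtain ⟨α, -, ht⟩ := htight
  have hnorm (j : Fin n) : ‖f j‖ ^ 2 = G.degree j := by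
    rw [norm_sq_eq_of_inner_self_eq_ofReal (hf_gram j j), G.lapMatrix_apply_self]
  have hdeg (j : Fin n) : (G.degree j : ℝ) = α - 1 := by
    have h := sum_sq_gram_eq_of_tight hf_gram ht j
    rw [G.sum_lapMatrix_apply_sq, G.lapMatrix_apply_self] at h
    have hdeg_ne_zero : (G.degree j : ℝ) ≠ 0 := by exact_mod_cast (Nat.one_le_iff_ne_zero.mp (hnull j))
    have hfactor : (G.degree j : ℝ) * (G.degree j + 1) = G.degree j * α := by
      linear_combination h
    linarith [mul_left_cancel₀ hdeg_ne_zero hfactor]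
  refine ⟨√(α - 1), fun i => ?_⟩
  rw [← hdeg i, ← hnorm i, Real.sqrt_sq (norm_nonneg _)]

theorem stmt_12 (n k : ℕ) (G : SimpleGraph (Fin n)) [DecidableRel G.Adj]
    (hnull : ∀ v : Fin n, 1 ≤ G.degree v)
    (f : Fin n → EuclideanSpace ℂ (Fin k))
    (hf_span : Submodule.span ℂ (Set.range f) = ⊤)
    (hf_gram : ∀ i j : Fin n, ⟪f i, f j⟫ = ((G.lapMatrix ℝ) i j : ℂ))
    (htight : ∃ α : ℝ, 0 < α ∧
      ∀ v : EuclideanSpace ℂ (Fin k),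
        ∑ i : Fin n, ‖⟪f i, v⟫‖ ^ 2 = α * ‖v‖ ^ 2) :
    ∃ c : ℝ, ∀ i : Fin n, ‖f i‖ = c :=
  stmt_12_general n k G hnull f hf_gram htight
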